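/- For any bipartite quasi-state ρ on ℂ^{d_A}⊗ℂ^{d_B}, the exact entanglement cost under PPTq operations equals the logarithmic negativity: E^{exact}_{C,PPTq}(ρ) = E_N(ρ), i.e., lim_{n→∞} (1/n) E^{(1)}_{0,C,PPTq}(ρ^{⊗n}) = E_N(ρ). -/

import Mathlib

open scoped BigOperators ComplexOrder

noncomputable section

/-- Bipartite matrices on `ℂ^{IA} ⊗ ℂ^{IB}`, indexed by pairs. -/
abbrev BMat (IA IB : Type) : Type := Matrix (IA × IB) (IA × IB) ℂ

/-- Partial transpose on the `B` system: `(X^{T_B})_{(i,j),(k,l)} = X_{(i,l),(k,j)}`. -/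
def ptB {IA IB : Type} (X : BMat IA IB) : BMat IA IB :=
  fun p q => X (p.1, q.2) (q.1, p.2)

/-- Trace norm `‖X‖₁ = tr √(X† X)`. -/
noncomputable def traceNorm {n : Type} [Fintype n] [DecidableEq n]
    (X : Matrix n n ℂ) : ℝ :=
  (((Matrix.posSemidef_conjTranspose_mul_self X).1.eigenvectorUnitary : Matrix n n ℂ) *
      Matrix.diagonal (((↑) : ℝ → ℂ) ∘ (Real.sqrt ·) ∘
        (Matrix.posSemidef_conjTranspose_mul_self X).1.eigenvalues) *
      (star (Matrix.posSemidef_conjTranspose_mul_self X).1.eigenvectorUnitary :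
        Matrix n n ℂ)).trace.re

/-- Operator norm (largest singular value). -/
noncomputable def opNorm {n : Type} [Fintype n] [DecidableEq n] (X : Matrix n n ℂ) : ℝ :=
  ‖Matrix.toEuclideanCLM (𝕜 := ℂ) X‖

/-- Logarithmic negativity `E_N(X) = log₂ ‖X^{T_B}‖₁`. -/
noncomputable def EN {IA IB : Type} [Fintype IA] [Fintype IB] [DecidableEq IA] [DecidableEq IB]
    (X : BMat IA IB) : ℝ :=
  Real.logb 2 (traceNorm (ptB X))

/-- The extension `id_k ⊗ f` of a map on matrices, acting blockwise. -/
def extMap {I J : Type} (f : Matrix I I ℂ → Matrix J J ℂ) (k : ℕ)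
    (M : Matrix (Fin k × I) (Fin k × I) ℂ) : Matrix (Fin k × J) (Fin k × J) ℂ :=
  fun p q => f (fun i i' => M (p.1, i) (q.1, i')) p.2 q.2

/-- A map on matrices is completely positive if all its extensions `id_k ⊗ f`
map positive semidefinite matrices to positive semidefinite matrices. -/
def CompletelyPositive {I J : Type} [Fintype I] [Fintype J]
    (f : Matrix I I ℂ → Matrix J J ℂ) : Prop :=
  ∀ (k : ℕ) (M : Matrix (Fin k × I) (Fin k × I) ℂ), M.PosSemidef → (extMap f k M).PosSemidef

/-- A PPTq operation: a Hermitian-preserving, trace-preserving linear map `N`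
such that `T_{B'} ∘ N ∘ T_B` is completely positive. -/
def IsPPTq {IA IB JA JB : Type} [Fintype IA] [Fintype IB] [Fintype JA] [Fintype JB]
    (N : BMat IA IB →ₗ[ℂ] BMat JA JB) : Prop :=
  (∀ X : BMat IA IB, X.IsHermitian → (N X).IsHermitian) ∧
  (∀ X : BMat IA IB, (N X).trace = X.trace) ∧
  CompletelyPositive (fun X => ptB (N (ptB X)))

/-- A bipartite quasi-state: Hermitian with trace one. -/
def IsQuasiState {IA IB : Type} [Fintype IA] [Fintype IB] (ρ : BMat IA IB) : Prop :=
  ρ.IsHermitian ∧ ρ.trace = 1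

/-- A bipartite quantum state: positive semidefinite with trace one. -/
def IsState {IA IB : Type} [Fintype IA] [Fintype IB] (ρ : BMat IA IB) : Prop :=
  ρ.PosSemidef ∧ ρ.trace = 1

/-- The maximally entangled state `Φ^d = (1/d) ∑_{i,j} |ii⟩⟨jj|`. -/
noncomputable def MES (d : ℕ) : BMat (Fin d) (Fin d) :=
  fun p q => if p.1 = p.2 ∧ q.1 = q.2 then (1 : ℂ) / d else 0

/-- `n`-fold tensor (Kronecker) power, with all `A` factors grouped against all `B` factors. -/
def tensorPow {IA IB : Type} (ρ : BMat IA IB) (n : ℕ) :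
    BMat (Fin n → IA) (Fin n → IB) :=
  fun p q => ∏ i : Fin n, ρ (p.1 i, p.2 i) (q.1 i, q.2 i)

/-- Tensor (Kronecker) product of two bipartite matrices, grouping `A` systems together
and `B` systems together. -/
def tensorMul {IA IB JA JB : Type} (ρ : BMat IA IB) (σ : BMat JA JB) :
    BMat (IA × JA) (IB × JB) :=
  fun p q => ρ (p.1.1, p.2.1) (q.1.1, q.2.1) * σ (p.1.2, p.2.2) (q.1.2, q.2.2)

/-- One-shot exact distillable entanglement under PPTq operations. -/
noncomputable def oneShotDistill {IA IB : Type} [Fintype IA] [Fintype IB]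
    (ρ : BMat IA IB) : ℝ :=
  sSup { x : ℝ | ∃ d : ℕ, 0 < d ∧ x = Real.logb 2 d ∧
    ∃ Λ : BMat IA IB →ₗ[ℂ] BMat (Fin d) (Fin d), IsPPTq Λ ∧ Λ ρ = MES d }

/-- One-shot exact entanglement cost under PPTq operations. -/
noncomputable def oneShotCost {IA IB : Type} [Fintype IA] [Fintype IB]
    (ρ : BMat IA IB) : ℝ :=
  sInf { x : ℝ | ∃ d : ℕ, 0 < d ∧ x = Real.logb 2 d ∧
    ∃ Λ : BMat (Fin d) (Fin d) →ₗ[ℂ] BMat IA IB, IsPPTq Λ ∧ Λ (MES d) = ρ }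

/-- The one-shot distillation error for `n` copies towards `Φ^d`, optimized over PPTq operations. -/
noncomputable def distillErr {IA IB : Type} [Fintype IA] [Fintype IB]
    [DecidableEq IA] [DecidableEq IB] (ρ : BMat IA IB) (n d : ℕ) : ℝ :=
  sInf { e : ℝ | ∃ Λ : BMat (Fin n → IA) (Fin n → IB) →ₗ[ℂ] BMat (Fin d) (Fin d),
    IsPPTq Λ ∧ e = traceNorm (Λ (tensorPow ρ n) - MES d) }

/-- The one-shot dilution error for preparing `n` copies from `Φ^d`, optimized over PPTq operations. -/
noncomputable def costErr {IA IB : Type} [Fintype IA] [Fintype IB]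
    [DecidableEq IA] [DecidableEq IB] (ρ : BMat IA IB) (n d : ℕ) : ℝ :=
  sInf { e : ℝ | ∃ Λ : BMat (Fin d) (Fin d) →ₗ[ℂ] BMat (Fin n → IA) (Fin n → IB),
    IsPPTq Λ ∧ e = traceNorm (tensorPow ρ n - Λ (MES d)) }

/-- Distillable entanglement under PPTq operations (asymptotically vanishing error). -/
noncomputable def EDppt {IA IB : Type} [Fintype IA] [Fintype IB]
    [DecidableEq IA] [DecidableEq IB] (ρ : BMat IA IB) : ℝ :=
  sSup { r : ℝ | Filter.Tendsto (fun n : ℕ => distillErr ρ n (2 ^ ⌊r * n⌋₊))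
    Filter.atTop (nhds 0) }

/-- Entanglement cost under PPTq operations (asymptotically vanishing error). -/
noncomputable def ECppt {IA IB : Type} [Fintype IA] [Fintype IB]
    [DecidableEq IA] [DecidableEq IB] (ρ : BMat IA IB) : ℝ :=
  sInf { r : ℝ | Filter.Tendsto (fun n : ℕ => costErr ρ n (2 ^ ⌈r * n⌉₊))
    Filter.atTop (nhds 0) }

/-- Tempered negativity `N_τ(σ | ρ)`. -/
noncomputable def temperedNeg {IA IB : Type} [Fintype IA] [Fintype IB]
    [DecidableEq IA] [DecidableEq IB] (σ ρ : BMat IA IB) : ℝ :=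
  sSup { t : ℝ | ∃ X : Matrix (IA × IB) (IA × IB) ℂ, X.IsHermitian ∧
    opNorm (ptB X) ≤ 1 ∧ (X * ρ).trace = (opNorm X : ℂ) ∧ (X * σ).trace = (t : ℂ) }

/-- Asymptotic exact conversion rate under PPTq operations. -/
noncomputable def convRate {IA IB JA JB : Type} [Fintype IA] [Fintype IB]
    [Fintype JA] [Fintype JB]
    (ρ : BMat IA IB) (σ : BMat JA JB) : ℝ :=
  sSup { r : ℝ | 0 ≤ r ∧ ∀ᶠ n : ℕ in Filter.atTop,
    ∃ Λ : BMat (Fin n → IA) (Fin n → IB) →ₗ[ℂ]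
          BMat (Fin ⌊r * n⌋₊ → JA) (Fin ⌊r * n⌋₊ → JB),
      IsPPTq Λ ∧ Λ (tensorPow ρ n) = tensorPow σ ⌊r * n⌋₊ }

/-!
Write `T = ρ^{T_B}`, `F` for the swap on `ℂ^d ⊗ ℂ^d` and `P₊ = (1 + F)/2`, `P₋ = 1 - P₊`, so that
`Φ_d^{T_B} = F/d = (P₊ - P₋)/d`. If `Λ` is PPTq with `Λ(Φ_d) = ρ`, the map `G = T_B ∘ Λ ∘ T_B` is
positive and trace preserving and `T = G(P₊/d) - G(P₋/d)`, so `‖T‖₁ ≤ tr (P₊ + P₋)/d = d`.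
Conversely, if `d ≥ ‖T‖₁ + 1`, then `T = ((d+1)/2) σ₊ - ((d-1)/2) σ₋` for states `σ±` built from
`T ± |T|` and `|T|`, and `T_B ∘ (tr(P₊ ·) σ₊ + tr(P₋ ·) σ₋) ∘ T_B` is a PPTq map sending `Φ_d` to
`ρ`. Hence the one-shot cost lies between `log₂ ‖T‖₁` and `log₂ (‖T‖₁ + 2)`; since `‖·‖₁` is
multiplicative under tensor products, dividing by `n` gives the limit.
-/

open Matrix
open scoped Kronecker MatrixOrder

section TraceNorm

variable {n : Type} [Fintype n] [DecidableEq n]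

theorem traceNorm_eq_re_trace_abs (X : Matrix n n ℂ) : traceNorm X = (CFC.abs X).trace.re := by
  have hXX := posSemidef_conjTranspose_mul_self X
  rw [CFC.abs, star_eq_conjTranspose, CFC.sqrt_eq_real_sqrt _ hXX.nonneg, cfcₙ_eq_cfc,
    hXX.1.cfc_eq, IsHermitian.cfc, Unitary.conjStarAlgAut_apply]
  rfl

theorem Matrix.PosSemidef.trace_mul_nonneg {A B : Matrix n n ℂ} (hA : A.PosSemidef)
    (hB : B.PosSemidef) : 0 ≤ (A * B).trace := by
  obtain ⟨C, rfl⟩ := CStarAlgebra.nonneg_iff_eq_star_mul_self.mp hB.nonneg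
  rw [star_eq_conjTranspose, ← mul_assoc, trace_mul_comm]
  simpa [mul_assoc] using (hA.mul_mul_conjTranspose_same C).trace_nonneg

theorem Matrix.IsHermitian.continuousOn_spectrum {X : Matrix n n ℂ} (hX : X.IsHermitian)
    (f : ℝ → ℝ) : ContinuousOn f (spectrum ℝ X) :=
  (hX.spectrum_real_eq_range_eigenvalues ▸ Set.finite_range _).continuousOn f

theorem Matrix.IsHermitian.exists_abs_eq_mul {X : Matrix n n ℂ} (hX : X.IsHermitian) :
    ∃ S : Matrix n n ℂ, CFC.abs X = S * X ∧ (1 - S).PosSemidef ∧ (1 + S).PosSemidef := by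
  set sign : ℝ → ℝ := fun x => if 0 ≤ x then 1 else -1
  have hc := hX.continuousOn_spectrum
  refine ⟨cfc sign X, ?_, ?_, ?_⟩
  · have hmul := cfc_mul sign id X (hc _) (hc _)
    rw [cfc_id ℝ X] at hmul
    rw [CFC.abs_eq_cfc_norm X hX, ← hmul]
    refine cfc_congr fun x _ => ?_
    by_cases h : 0 ≤ x
    · simp [sign, h, abs_of_nonneg]
    · simp [sign, h, abs_of_neg (not_le.mp h)]
  · rw [← cfc_const_one ℝ X, ← cfc_sub _ _ X (hc _) (hc _)]
    exact nonneg_iff_posSemidef.mp <| cfc_nonneg fun x _ => by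
      by_cases h : 0 ≤ x <;> simp [sign, h]
  · rw [← cfc_const_one ℝ X, ← cfc_add X _ _ (hc _) (hc _)]
    exact nonneg_iff_posSemidef.mp <| cfc_nonneg fun x _ => by
      by_cases h : 0 ≤ x <;> simp [sign, h]

theorem traceNorm_sub_le {A B : Matrix n n ℂ} (hA : A.PosSemidef) (hB : B.PosSemidef) :
    traceNorm (A - B) ≤ A.trace.re + B.trace.re := by
  obtain ⟨S, hS, hA', hB'⟩ := (hA.1.sub hB.1).exists_abs_eq_mul
  have hgap : A.trace + B.trace - (CFC.abs (A - B)).trace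
      = ((1 - S) * A).trace + ((1 + S) * B).trace := by
    rw [hS]
    simp only [sub_mul, add_mul, mul_sub, one_mul, trace_sub, trace_add]
    ring
  have h := Complex.re_le_re (add_nonneg (hA'.trace_mul_nonneg hA) (hB'.trace_mul_nonneg hB))
  rw [← hgap, Complex.zero_re, Complex.sub_re, Complex.add_re] at h
  rw [traceNorm_eq_re_trace_abs]
  linarith

theorem Matrix.IsHermitian.re_trace_le_traceNorm {X : Matrix n n ℂ} (hX : X.IsHermitian) :
    X.trace.re ≤ traceNorm X := by
  have h : (0 : Matrix n n ℂ) ≤ CFC.abs X - X := by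
    rw [CFC.abs_sub_self X hX]
    exact smul_nonneg zero_le_two (CFC.negPart_nonneg X)
  rw [traceNorm_eq_re_trace_abs, ← sub_nonneg, ← Complex.sub_re, ← trace_sub]
  exact Complex.re_le_re (nonneg_iff_posSemidef.mp h).trace_nonneg

theorem traceNorm_one : traceNorm (1 : Matrix n n ℂ) = Fintype.card n := by
  simp [traceNorm_eq_re_trace_abs]

theorem Matrix.IsHermitian.exists_posSemidef_sub_eq {T : Matrix n n ℂ} (hT : T.IsHermitian)
    (htr : T.trace = 1) {d : ℕ} (hd : traceNorm T + 1 ≤ d) :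
    ∃ σp σm : Matrix n n ℂ, σp.PosSemidef ∧ σm.PosSemidef ∧ σp.trace = 1 ∧ σm.trace = 1 ∧
      T = ((d + 1) / 2 : ℂ) • σp - ((d - 1) / 2 : ℂ) • σm := by
  set Z := traceNorm T
  set W := CFC.abs T
  have hW : W.PosSemidef := nonneg_iff_posSemidef.mp (CFC.abs_nonneg T)
  have hWtr : W.trace = Z := Complex.ext (by simp [Z, W, traceNorm_eq_re_trace_abs])
    (by simpa using (Complex.nonneg_iff.mp hW.trace_nonneg).2.symm)
  have hZ : 1 ≤ Z := by simpa [htr] using hT.re_trace_le_traceNorm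
  have hWT : (W + T).PosSemidef := by
    rw [CFC.abs_add_self T hT]
    exact nonneg_iff_posSemidef.mp (smul_nonneg zero_le_two (CFC.posPart_nonneg T))
  have hWT' : (W - T).PosSemidef := by
    rw [CFC.abs_sub_self T hT]
    exact nonneg_iff_posSemidef.mp (smul_nonneg zero_le_two (CFC.negPart_nonneg T))
  have hd0 : (0 : ℝ) < d := by linarith
  have hdC : (d : ℂ) ≠ 0 := by exact_mod_cast hd0.ne'
  have hZC : (Z : ℂ) ≠ 0 := by exact_mod_cast (zero_lt_one.trans_le hZ).ne'
  have hinv : (0 : ℂ) ≤ (d : ℂ)⁻¹ := by positivity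
  have hcoef : ∀ {x : ℝ}, x ≤ d → (0 : ℂ) ≤ (((d - x) / (d * Z) : ℝ) : ℂ) := fun hx =>
    Complex.zero_le_real.mpr (div_nonneg (by linarith) (by positivity))
  refine ⟨(d : ℂ)⁻¹ • (W + T) + (((d - (1 + Z)) / (d * Z) : ℝ) : ℂ) • W,
    (d : ℂ)⁻¹ • (W - T) + (((d - (Z - 1)) / (d * Z) : ℝ) : ℂ) • W,
    (hWT.smul hinv).add (hW.smul (hcoef (by linarith))),
    (hWT'.smul hinv).add (hW.smul (hcoef (by linarith))), ?_, ?_, ?_⟩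
  · rw [trace_add, trace_smul, trace_smul, trace_add, hWtr, htr, smul_eq_mul, smul_eq_mul]
    push_cast
    field_simp
    ring
  · rw [trace_add, trace_smul, trace_smul, trace_sub, hWtr, htr, smul_eq_mul, smul_eq_mul]
    push_cast
    field_simp
    ring
  · push_cast
    match_scalars <;> field_simp <;> ring

end TraceNorm

theorem Matrix.trace_submatrix_equiv {R : Type*} [AddCommMonoid R] {m n : Type} [Fintype m]
    [Fintype n] (M : Matrix m m R) (e : n ≃ m) : (M.submatrix e e).trace = M.trace :=
  Fintype.sum_equiv e _ _ fun _ => rfl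

section Reindex

variable {m n : Type} [Fintype m] [DecidableEq m] [Fintype n] [DecidableEq n]

theorem Matrix.cfcAbs_submatrix_equiv (M : Matrix m m ℂ) (e : n ≃ m) :
    CFC.abs (M.submatrix e e) = (CFC.abs M).submatrix e e := by
  refine CFC.sqrt_unique ?_ (nonneg_iff_posSemidef.mp (CFC.abs_nonneg M) |>.submatrix e).nonneg
  rw [submatrix_mul_equiv, CFC.abs_mul_abs, star_eq_conjTranspose, star_eq_conjTranspose,
    conjTranspose_submatrix, submatrix_mul_equiv]

theorem Matrix.cfcAbs_kronecker (A : Matrix m m ℂ) (B : Matrix n n ℂ) :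
    CFC.abs (A ⊗ₖ B) = CFC.abs A ⊗ₖ CFC.abs B := by
  refine CFC.sqrt_unique ?_ ((nonneg_iff_posSemidef.mp (CFC.abs_nonneg A)).kronecker
    (nonneg_iff_posSemidef.mp (CFC.abs_nonneg B))).nonneg
  rw [← mul_kronecker_mul, CFC.abs_mul_abs, CFC.abs_mul_abs, star_eq_conjTranspose,
    star_eq_conjTranspose, star_eq_conjTranspose, conjTranspose_kronecker, mul_kronecker_mul]

theorem traceNorm_submatrix_equiv (M : Matrix m m ℂ) (e : n ≃ m) :
    traceNorm (M.submatrix e e) = traceNorm M := by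
  rw [traceNorm_eq_re_trace_abs, traceNorm_eq_re_trace_abs, cfcAbs_submatrix_equiv,
    trace_submatrix_equiv]

theorem traceNorm_kronecker (A : Matrix m m ℂ) (B : Matrix n n ℂ) :
    traceNorm (A ⊗ₖ B) = traceNorm A * traceNorm B := by
  have him : ∀ {k : Type} [Fintype k] [DecidableEq k] (X : Matrix k k ℂ),
      (CFC.abs X).trace.im = 0 := fun X =>
    ((Complex.nonneg_iff.mp (nonneg_iff_posSemidef.mp (CFC.abs_nonneg X)).trace_nonneg).2).symm
  rw [traceNorm_eq_re_trace_abs, traceNorm_eq_re_trace_abs, traceNorm_eq_re_trace_abs,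
    cfcAbs_kronecker, trace_kronecker, Complex.mul_re, him A, him B, mul_zero, sub_zero]

end Reindex

section CompletelyPositive

variable {I J : Type} [Fintype I] [Fintype J]

theorem CompletelyPositive.posSemidef {f : Matrix I I ℂ → Matrix J J ℂ}
    (hf : CompletelyPositive f) {A : Matrix I I ℂ} (hA : A.PosSemidef) : (f A).PosSemidef := by
  have h := hf 1 (A.submatrix Prod.snd Prod.snd) (hA.submatrix _)
  have hext : extMap f 1 (A.submatrix Prod.snd Prod.snd) = (f A).submatrix Prod.snd Prod.snd :=
    rfl
  rw [hext] at h
  simpa using h.submatrix fun j => ((0 : Fin 1), j)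

theorem CompletelyPositive.add {f g : Matrix I I ℂ → Matrix J J ℂ} (hf : CompletelyPositive f)
    (hg : CompletelyPositive g) : CompletelyPositive (f + g) :=
  fun k M hM => (hf k M hM).add (hg k M hM)

theorem completelyPositive_trace_mul_smul [DecidableEq I] {E : Matrix I I ℂ} {σ : Matrix J J ℂ}
    (hE : E.PosSemidef) (hσ : σ.PosSemidef) :
    CompletelyPositive (fun X => (E * X).trace • σ) := by
  intro k M hM
  obtain ⟨B, rfl⟩ := CStarAlgebra.nonneg_iff_eq_star_mul_self.mp hE.nonneg
  -- `tr (B⋆ B M_ab) = ∑ r, (B M_ab B⋆) r r` is the `(a, b)` entry of `∑ r, (V r)ᴴ M (V r)`.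
  let V : I → Matrix (Fin k × I) (Fin k) ℂ := fun r =>
    Matrix.of fun x b => if x.1 = b then star (B r x.2) else 0
  have hblock : Matrix.of (fun a b => (star B * B * Matrix.of fun i j => M (a, i) (b, j)).trace)
      = ∑ r, (V r)ᴴ * M * V r := by
    ext a b
    simp only [trace, diag_apply, mul_apply, star_apply, RCLike.star_def, of_apply,
      Matrix.sum_apply, conjTranspose_apply, apply_ite (starRingEnd ℂ), RingHomCompTriple.comp_apply,
      RingHom.id_apply, map_zero, ite_mul, zero_mul, Fintype.sum_prod_type, Finset.sum_ite_irrel,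
      Finset.sum_const_zero, Finset.sum_ite_eq', Finset.mem_univ, ↓reduceIte, mul_ite, mul_zero, V,
      Finset.sum_mul]
    conv_rhs => rw [Finset.sum_comm]
    refine Finset.sum_congr rfl fun i _ => ?_
    conv_rhs => rw [Finset.sum_comm]
    exact Finset.sum_congr rfl fun j _ => Finset.sum_congr rfl fun c _ => by ring
  have hext : extMap (fun X => (star B * B * X).trace • σ) k M
      = Matrix.of (fun a b => (star B * B * Matrix.of fun i j => M (a, i) (b, j)).trace) ⊗ₖ σ :=
    rfl
  rw [hext, hblock]
  exact (posSemidef_sum Finset.univ fun r _ => hM.conjTranspose_mul_mul_same (V r)).kronecker hσ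

end CompletelyPositive

theorem Matrix.IsHermitian.isSelfAdjoint_trace_mul {n : Type} [Fintype n] {A B : Matrix n n ℂ}
    (hA : A.IsHermitian) (hB : B.IsHermitian) : IsSelfAdjoint (A * B).trace := by
  rw [IsSelfAdjoint, ← trace_conjTranspose, conjTranspose_mul, hA.eq, hB.eq, trace_mul_comm]

def measurePrepare {I J : Type} [Fintype I] (E : Matrix I I ℂ) (σ : Matrix J J ℂ) :
    Matrix I I ℂ →ₗ[ℂ] Matrix J J ℂ :=
  ((traceLinearMap I ℂ ℂ) ∘ₗ LinearMap.mulLeft ℂ E).smulRight σ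

section PartialTranspose

variable {IA IB : Type}

def ptBLinearMap : BMat IA IB →ₗ[ℂ] BMat IA IB where
  toFun := ptB
  map_add' _ _ := rfl
  map_smul' _ _ := rfl

theorem ptB_ptB (X : BMat IA IB) : ptB (ptB X) = X := rfl

theorem ptB_sub (X Y : BMat IA IB) : ptB (X - Y) = ptB X - ptB Y := rfl

theorem trace_ptB [Fintype IA] [Fintype IB] (X : BMat IA IB) : (ptB X).trace = X.trace := rfl

theorem Matrix.IsHermitian.ptB {X : BMat IA IB} (hX : X.IsHermitian) : (ptB X).IsHermitian :=
  funext fun p => funext fun q => congrFun (congrFun hX (p.1, q.2)) (q.1, p.2)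

end PartialTranspose

section TensorPower

variable {IA IB : Type}

def tensorPowSuccEquiv (IA IB : Type) (n : ℕ) :
    (Fin (n + 1) → IA) × (Fin (n + 1) → IB) ≃ (IA × IB) × ((Fin n → IA) × (Fin n → IB)) :=
  ((Fin.consEquiv fun _ => IA).symm.prodCongr (Fin.consEquiv fun _ => IB).symm).trans
    (Equiv.prodProdProdComm ..)

theorem tensorPow_zero [DecidableEq IA] [DecidableEq IB] (ρ : BMat IA IB) : tensorPow ρ 0 = 1 := by
  ext p q
  rw [Subsingleton.elim p q]
  simp [tensorPow]

theorem tensorPow_succ (ρ : BMat IA IB) (n : ℕ) :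
    tensorPow ρ (n + 1) =
      (ρ ⊗ₖ tensorPow ρ n).submatrix (tensorPowSuccEquiv IA IB n) (tensorPowSuccEquiv IA IB n) := by
  ext p q
  simp [tensorPow, tensorPowSuccEquiv, Fin.prod_univ_succ, Fin.tail]

theorem ptB_tensorPow (ρ : BMat IA IB) (n : ℕ) : ptB (tensorPow ρ n) = tensorPow (ptB ρ) n := rfl

theorem Matrix.IsHermitian.tensorPow {ρ : BMat IA IB} (hρ : ρ.IsHermitian) (n : ℕ) :
    (tensorPow ρ n).IsHermitian := by
  ext p q
  simp only [conjTranspose_apply, _root_.tensorPow, star_prod]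
  exact Finset.prod_congr rfl fun i _ => congrFun (congrFun hρ (p.1 i, p.2 i)) (q.1 i, q.2 i)

variable [Fintype IA] [Fintype IB] [DecidableEq IA] [DecidableEq IB]

theorem trace_tensorPow (ρ : BMat IA IB) (n : ℕ) : (tensorPow ρ n).trace = ρ.trace ^ n := by
  induction n with
  | zero => simp [tensorPow_zero]
  | succ n ih => rw [tensorPow_succ, trace_submatrix_equiv, trace_kronecker, ih, pow_succ']

theorem traceNorm_tensorPow (ρ : BMat IA IB) (n : ℕ) :
    traceNorm (tensorPow ρ n) = traceNorm ρ ^ n := by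
  induction n with
  | zero => simp [tensorPow_zero, traceNorm_one]
  | succ n ih =>
    rw [tensorPow_succ, traceNorm_submatrix_equiv, traceNorm_kronecker, ih, pow_succ']

end TensorPower

theorem isStarProjection_half_smul_one_add {R : Type*} [Ring R] [StarRing R] [Algebra ℂ R]
    [StarModule ℂ R] {F : R} (hF : IsSelfAdjoint F) (hF2 : F * F = 1) :
    IsStarProjection ((2⁻¹ : ℂ) • (1 + F)) where
  isIdempotentElem := by
    rw [IsIdempotentElem, smul_mul_smul_comm, add_mul, one_mul, mul_add, mul_one, hF2,
      add_comm F 1, ← two_smul ℂ, smul_smul]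
    norm_num
  isSelfAdjoint := by
    rw [IsSelfAdjoint, star_smul, star_add, star_one, hF.star_eq, star_inv₀, star_ofNat]

section MaximallyEntangled

variable {d : ℕ}

def swapMat (d : ℕ) : BMat (Fin d) (Fin d) :=
  Equiv.Perm.permMatrix ℂ (Equiv.prodComm (Fin d) (Fin d))

theorem ptB_MES : ptB (MES d) = (d : ℂ)⁻¹ • swapMat d := by
  ext p q
  simp only [ptB, MES, swapMat, one_div, Matrix.smul_apply, PEquiv.toMatrix_apply, smul_eq_mul,
    mul_ite, mul_one, mul_zero]
  congr 1
  simp [Prod.ext_iff, eq_comm (a := q.1), and_comm]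

theorem swapMat_mul_self : swapMat d * swapMat d = 1 := by
  rw [swapMat, ← permMatrix_mul, show Equiv.prodComm (Fin d) (Fin d) * Equiv.prodComm _ _ = 1 from
    Equiv.ext fun _ => rfl, permMatrix_one]

theorem isSelfAdjoint_swapMat : IsSelfAdjoint (swapMat d) := by
  rw [IsSelfAdjoint, swapMat, star_eq_conjTranspose, conjTranspose_permMatrix]
  rfl

theorem trace_swapMat : (swapMat d).trace = d := by
  rw [trace, Fintype.sum_prod_type]
  simp [swapMat, PEquiv.toMatrix_apply, Prod.ext_iff, Finset.filter_eq', Finset.filter_and]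

def symProj (d : ℕ) : BMat (Fin d) (Fin d) := (2⁻¹ : ℂ) • (1 + swapMat d)

theorem isStarProjection_symProj : IsStarProjection (symProj d) :=
  isStarProjection_half_smul_one_add isSelfAdjoint_swapMat swapMat_mul_self

theorem posSemidef_symProj : (symProj d).PosSemidef :=
  nonneg_iff_posSemidef.mp isStarProjection_symProj.nonneg

theorem posSemidef_one_sub_symProj : (1 - symProj d).PosSemidef :=
  nonneg_iff_posSemidef.mp isStarProjection_symProj.one_sub.nonneg

theorem swapMat_eq_symProj_sub : swapMat d = symProj d - (1 - symProj d) := by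
  rw [symProj, sub_sub_eq_add_sub, ← two_smul ℂ, smul_smul]
  norm_num

theorem trace_symProj_add_one_sub : (symProj d).trace + (1 - symProj d).trace = d ^ 2 := by
  rw [← trace_add, add_sub_cancel, trace_one, Fintype.card_prod, Fintype.card_fin]
  push_cast
  ring

theorem trace_symProj_mul_ptB_MES (hd : 0 < d) :
    (symProj d * ptB (MES d)).trace = ((d + 1) / 2 : ℂ) := by
  have hd' : (d : ℂ) ≠ 0 := by exact_mod_cast hd.ne'
  rw [ptB_MES, symProj, smul_mul_smul_comm, add_mul, one_mul, swapMat_mul_self, trace_smul,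
    trace_add, trace_swapMat, trace_one, Fintype.card_prod, Fintype.card_fin, smul_eq_mul]
  push_cast
  field_simp
  ring

theorem trace_one_sub_symProj_mul_ptB_MES (hd : 0 < d) :
    ((1 - symProj d) * ptB (MES d)).trace = -((d - 1) / 2 : ℂ) := by
  rw [sub_mul, one_mul, trace_sub, trace_symProj_mul_ptB_MES hd, ptB_MES, trace_smul,
    trace_swapMat, smul_eq_mul, inv_mul_cancel₀ (by exact_mod_cast hd.ne')]
  ring

end MaximallyEntangled

section PPTq

variable {IA IB : Type} [Fintype IA] [Fintype IB]

theorem traceNorm_ptB_le_of_isPPTq [DecidableEq IA] [DecidableEq IB] {d : ℕ} {ρ : BMat IA IB}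
    {Λ : BMat (Fin d) (Fin d) →ₗ[ℂ] BMat IA IB} (hΛ : IsPPTq Λ) (hρ : Λ (MES d) = ρ) :
    traceNorm (ptB ρ) ≤ d := by
  obtain ⟨-, htr, hcp⟩ := hΛ
  set P := symProj d
  have hinv : (0 : ℂ) ≤ (d : ℂ)⁻¹ := by positivity
  have hP : ((d : ℂ)⁻¹ • P).PosSemidef := posSemidef_symProj.smul hinv
  have hQ : ((d : ℂ)⁻¹ • (1 - P)).PosSemidef := posSemidef_one_sub_symProj.smul hinv
  have hsplit : ptB ρ =
      ptB (Λ (ptB ((d : ℂ)⁻¹ • P))) - ptB (Λ (ptB ((d : ℂ)⁻¹ • (1 - P)))) := by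
    rw [← ptB_sub, ← map_sub, ← ptB_sub, ← smul_sub, ← swapMat_eq_symProj_sub, ← ptB_MES,
      ptB_ptB, hρ]
  calc traceNorm (ptB ρ) ≤ _ := hsplit ▸ traceNorm_sub_le (hcp.posSemidef hP) (hcp.posSemidef hQ)
    _ = d := by
      rw [trace_ptB, htr, trace_ptB, trace_ptB, htr, trace_ptB, ← Complex.add_re, trace_smul,
        trace_smul, smul_eq_mul, smul_eq_mul, ← mul_add, trace_symProj_add_one_sub]
      rcases Nat.eq_zero_or_pos d with rfl | hd
      · simp
      · rw [sq, inv_mul_cancel_left₀ (by exact_mod_cast hd.ne'), Complex.natCast_re]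

theorem exists_isPPTq_map_MES_eq_of_ptB_eq {d : ℕ} (hd : 0 < d) {ρ σp σm : BMat IA IB}
    (hσp : σp.PosSemidef) (hσm : σm.PosSemidef) (htp : σp.trace = 1) (htm : σm.trace = 1)
    (hρ : ptB ρ = ((d + 1) / 2 : ℂ) • σp - ((d - 1) / 2 : ℂ) • σm) :
    ∃ Λ : BMat (Fin d) (Fin d) →ₗ[ℂ] BMat IA IB, IsPPTq Λ ∧ Λ (MES d) = ρ := by
  set P := symProj d
  have hP : P.PosSemidef := posSemidef_symProj
  have hQ : (1 - P).PosSemidef := posSemidef_one_sub_symProj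
  refine ⟨ptBLinearMap ∘ₗ (measurePrepare P σp + measurePrepare (1 - P) σm) ∘ₗ ptBLinearMap,
    ⟨fun X hX => ?_, fun X => ?_, ?_⟩, ?_⟩
  · have hX' := hX.ptB
    exact IsHermitian.ptB <| ((hP.1.isSelfAdjoint_trace_mul hX').smul hσp.1).add
      ((hQ.1.isSelfAdjoint_trace_mul hX').smul hσm.1)
  · change (ptB ((P * ptB X).trace • σp + ((1 - P) * ptB X).trace • σm)).trace = X.trace
    rw [trace_ptB, trace_add, trace_smul, trace_smul, htp, htm, smul_eq_mul, smul_eq_mul, mul_one,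
      mul_one, ← trace_add, ← add_mul, add_sub_cancel, one_mul, trace_ptB]
  · exact (completelyPositive_trace_mul_smul hP hσp).add (completelyPositive_trace_mul_smul hQ hσm)
  · change ptB ((P * ptB (MES d)).trace • σp + ((1 - P) * ptB (MES d)).trace • σm) = ρ
    rw [trace_symProj_mul_ptB_MES hd, trace_one_sub_symProj_mul_ptB_MES hd, neg_smul,
      ← sub_eq_add_neg, ← hρ, ptB_ptB]

end PPTq

section OneShotCost

variable {IA IB : Type} [Fintype IA] [Fintype IB] [DecidableEq IA] [DecidableEq IB]

theorem IsQuasiState.one_le_traceNorm_ptB {ρ : BMat IA IB} (hρ : IsQuasiState ρ) :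
    1 ≤ traceNorm (ptB ρ) := by
  simpa [trace_ptB, hρ.2] using hρ.1.ptB.re_trace_le_traceNorm

theorem IsQuasiState.exists_isPPTq_map_MES_eq {ρ : BMat IA IB} (hρ : IsQuasiState ρ) {d : ℕ}
    (hd : traceNorm (ptB ρ) + 1 ≤ d) :
    ∃ Λ : BMat (Fin d) (Fin d) →ₗ[ℂ] BMat IA IB, IsPPTq Λ ∧ Λ (MES d) = ρ := by
  obtain ⟨σp, σm, hσp, hσm, htp, htm, hdec⟩ :=
    hρ.1.ptB.exists_posSemidef_sub_eq (by rw [trace_ptB, hρ.2]) hd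
  have hd0 : (0 : ℝ) < d := by linarith [hρ.one_le_traceNorm_ptB]
  exact exists_isPPTq_map_MES_eq_of_ptB_eq (by exact_mod_cast hd0) hσp hσm htp htm hdec

theorem IsQuasiState.oneShotCost_mem_Icc {ρ : BMat IA IB} (hρ : IsQuasiState ρ) :
    oneShotCost ρ ∈
      Set.Icc (Real.logb 2 (traceNorm (ptB ρ))) (Real.logb 2 (traceNorm (ptB ρ) + 2)) := by
  set Z := traceNorm (ptB ρ)
  have hZ : 1 ≤ Z := hρ.one_le_traceNorm_ptB
  set d := ⌈Z⌉₊ + 1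
  have hdZ : Z + 1 ≤ d ∧ (d : ℝ) ≤ Z + 2 := by
    constructor <;> push_cast [d] <;>
      linarith [Nat.le_ceil Z, Nat.ceil_lt_add_one (zero_le_one.trans hZ)]
  obtain ⟨Λ, hΛ, hΛρ⟩ := hρ.exists_isPPTq_map_MES_eq hdZ.1
  have hlower : ∀ x ∈ { x : ℝ | ∃ d : ℕ, 0 < d ∧ x = Real.logb 2 d ∧
      ∃ Λ : BMat (Fin d) (Fin d) →ₗ[ℂ] BMat IA IB, IsPPTq Λ ∧ Λ (MES d) = ρ },
      Real.logb 2 Z ≤ x := by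
    rintro x ⟨d, -, rfl, Λ, hΛ, hΛρ⟩
    exact Real.logb_le_logb_of_le one_lt_two (by linarith) (traceNorm_ptB_le_of_isPPTq hΛ hΛρ)
  have hmem : Real.logb 2 d ∈ { x : ℝ | ∃ d : ℕ, 0 < d ∧ x = Real.logb 2 d ∧
      ∃ Λ : BMat (Fin d) (Fin d) →ₗ[ℂ] BMat IA IB, IsPPTq Λ ∧ Λ (MES d) = ρ } :=
    ⟨d, Nat.succ_pos _, rfl, Λ, hΛ, hΛρ⟩
  exact ⟨le_csInf ⟨_, hmem⟩ hlower, (csInf_le ⟨_, hlower⟩ hmem).trans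
    (Real.logb_le_logb_of_le one_lt_two (by positivity) hdZ.2)⟩

end OneShotCost

theorem tendsto_one_div_mul_of_le_of_le_add {a : ℕ → ℝ} {L C : ℝ}
    (h : ∀ᶠ n : ℕ in Filter.atTop, n * L ≤ a n ∧ a n ≤ n * L + C) :
    Filter.Tendsto (fun n : ℕ => (1 / n : ℝ) * a n) Filter.atTop (nhds L) := by
  have hupper : Filter.Tendsto (fun n : ℕ => L + (1 / n : ℝ) * C) Filter.atTop (nhds L) := by
    simpa using (tendsto_one_div_atTop_nhds_zero_nat.mul_const C).const_add L
  refine tendsto_of_tendsto_of_tendsto_of_le_of_le' tendsto_const_nhds hupper ?_ ?_ <;>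
    filter_upwards [h, Filter.eventually_gt_atTop 0] with n hn hn0
  · rw [one_div, le_inv_mul_iff₀ (by positivity)]
    exact hn.1
  · rw [one_div, inv_mul_le_iff₀ (by positivity), mul_add, mul_inv_cancel_left₀ (by positivity)]
    exact hn.2

/-- The exact entanglement cost under PPTq operations equals
the logarithmic negativity: `lim_{n→∞} (1/n)·E^{(1)}_{0,C,PPTq}(ρ^{⊗n}) = E_N(ρ)`. -/
theorem exactCost_eq_EN {dA dB : ℕ}
    (ρ : BMat (Fin dA) (Fin dB)) (hρ : IsQuasiState ρ) :
    Filter.Tendsto (fun n : ℕ => (1 / n : ℝ) * oneShotCost (tensorPow ρ n))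
      Filter.atTop (nhds (EN ρ)) := by
  have hZ : 1 ≤ traceNorm (ptB ρ) := hρ.one_le_traceNorm_ptB
  refine tendsto_one_div_mul_of_le_of_le_add (C := Real.logb 2 3)
    (Filter.Eventually.of_forall fun n => ?_)
  have hρn : IsQuasiState (tensorPow ρ n) :=
    ⟨hρ.1.tensorPow n, by rw [trace_tensorPow, hρ.2, one_pow]⟩
  obtain ⟨hlow, hup⟩ := hρn.oneShotCost_mem_Icc
  rw [ptB_tensorPow, traceNorm_tensorPow] at hlow hup
  have hZn : 1 ≤ traceNorm (ptB ρ) ^ n := one_le_pow₀ hZ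
  refine ⟨by rwa [Real.logb_pow] at hlow, hup.trans ?_⟩
  calc Real.logb 2 (traceNorm (ptB ρ) ^ n + 2) ≤ Real.logb 2 (3 * traceNorm (ptB ρ) ^ n) :=
        Real.logb_le_logb_of_le one_lt_two (by positivity) (by linarith)
    _ = n * EN ρ + Real.logb 2 3 := by
      rw [Real.logb_mul (by norm_num) (by positivity), Real.logb_pow, EN, add_comm]

end
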